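/- Let Σ and Λ be real d×d positive semidefinite matrices with unit diagonal, and let f_1,…,f_d and g_1,…,g_d be strictly increasing continuous bijections from ℝ to ℝ. Let P be the pushforward of the centered multivariate Gaussian N_d(0, Σ) under the map z ↦ (f_1^{−1}(z_1),…,f_d^{−1}(z_d)), and let Q be the pushforward of N_d(0, Λ) under z ↦ (g_1^{−1}(z_1),…,g_d^{−1}(z_d)). If Σ = Λ and for each j = 1,…,d the pushforward of P under the j-th coordinate projection equals the pushforward of Q under the j-th coordinate projection, then P = Q. That is, a nonparanormal distribution is uniquely determined by its univariate marginal distributions and its latent correlation matrix. -/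

import Mathlib

open MeasureTheory ProbabilityTheory Matrix
open scoped Classical

/-- The unique positive semidefinite square root of a positive semidefinite real matrix
(junk value `0` if the matrix is not positive semidefinite). -/
noncomputable def psdSqrt {d : ℕ} (M : Matrix (Fin d) (Fin d) ℝ) : Matrix (Fin d) (Fin d) ℝ :=
  if h : M.PosSemidef then
    (h.1.eigenvectorUnitary : Matrix (Fin d) (Fin d) ℝ) *
      diagonal ((RCLike.ofReal : ℝ → ℝ) ∘ Real.sqrt ∘ h.1.eigenvalues) *
      (star h.1.eigenvectorUnitary : Matrix (Fin d) (Fin d) ℝ)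
  else 0

/-- The multivariate Gaussian measure `N_d(m, S)` on ℝ^d with mean `m` and positive
semidefinite covariance `S`, realized as the pushforward of the standard Gaussian
under `x ↦ m + S^{1/2} x`. -/
noncomputable def gaussianPi (d : ℕ) (m : Fin d → ℝ) (S : Matrix (Fin d) (Fin d) ℝ) :
    Measure (Fin d → ℝ) :=
  (Measure.pi fun _ : Fin d => gaussianReal 0 1).map fun x => m + (psdSqrt S).mulVec x

/-!
The latent Gaussian is the same for `P` and `Q`, so it suffices to show `f = g`. The `j`-th
marginal of `P` is the image of the `j`-th latent marginal `ν_j` under `f_j⁻¹`, hence its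
distribution function is `t ↦ ν_j (Iic (f_j t))`. The row `j` of `S^{1/2}` is nonzero because
`S j j = 1`, so `ν_j` is the image of a standard Gaussian under a surjective linear functional and
charges every nonempty open set; its distribution function is therefore strictly increasing, and
equality of the marginals forces `f_j = g_j`.
-/

section InvFun

variable {α β : Type*} [LinearOrder α] [LinearOrder β] [Nonempty α] {f : α → β}

theorem StrictMono.invFun_eq_orderIsoOfSurjective_symm (hf : StrictMono f)
    (hs : Function.Surjective f) :
    Function.invFun f = (hf.orderIsoOfSurjective f hs).symm := by
  funext y
  rw [eq_comm, OrderIso.symm_apply_eq, hf.coe_orderIsoOfSurjective, Function.invFun_eq (hs y)]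

theorem StrictMono.continuous_invFun [TopologicalSpace α] [OrderTopology α] [TopologicalSpace β]
    [OrderTopology β] (hf : StrictMono f) (hs : Function.Surjective f) :
    Continuous (Function.invFun f) := by
  rw [hf.invFun_eq_orderIsoOfSurjective_symm hs]
  exact OrderIso.continuous _

theorem StrictMono.invFun_le_iff (hf : StrictMono f) (hs : Function.Surjective f)
    (y : β) (t : α) :
    Function.invFun f y ≤ t ↔ y ≤ f t := by
  rw [← hf.le_iff_le, Function.invFun_eq (hs y)]

end InvFun

theorem gaussianReal_isOpenPosMeasure (m : ℝ) {v : NNReal} (hv : v ≠ 0) :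
    (gaussianReal m v).IsOpenPosMeasure := by
  rw [gaussianReal_of_var_ne_zero m hv]
  refine ⟨fun U hU hne h => ?_⟩
  rw [withDensity_apply_eq_zero (measurable_gaussianPDF m v)] at h
  have hsupp : {x : ℝ | gaussianPDF m v x ≠ 0} = Set.univ :=
    Set.eq_univ_of_forall fun x => (gaussianPDF_pos m hv x).ne'
  rw [hsupp, Set.univ_inter] at h
  exact hU.measure_ne_zero volume hne h

theorem strictMono_measure_Iic {α : Type*} [LinearOrder α] [DenselyOrdered α]
    [TopologicalSpace α] [OrderTopology α] [MeasurableSpace α] [OpensMeasurableSpace α]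
    (μ : Measure α) [IsFiniteMeasure μ] [μ.IsOpenPosMeasure] :
    StrictMono fun t => μ (Set.Iic t) := by
  intro a b hab
  have hslab : 0 < μ (Set.Ioc a b) :=
    (isOpen_Ioo.measure_pos μ (Set.nonempty_Ioo.mpr hab)).trans_le
      (measure_mono Set.Ioo_subset_Ioc_self)
  calc μ (Set.Iic a) < μ (Set.Iic a) + μ (Set.Ioc a b) :=
        ENNReal.lt_add_right (measure_ne_top μ _) hslab.ne'
    _ = μ (Set.Iic b) := by
        rw [← measure_union (Set.Iic_disjoint_Ioc le_rfl) measurableSet_Ioc,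
          Set.Iic_union_Ioc_eq_Iic hab.le]

theorem eq_of_map_invFun_eq (μ : Measure ℝ) [IsFiniteMeasure μ] [μ.IsOpenPosMeasure]
    {f g : ℝ → ℝ} (hf : StrictMono f) (hfs : Function.Surjective f)
    (hg : StrictMono g) (hgs : Function.Surjective g)
    (h : μ.map (Function.invFun f) = μ.map (Function.invFun g)) : f = g := by
  have hcdf : ∀ {u : ℝ → ℝ}, StrictMono u → Function.Surjective u → ∀ t,
      μ.map (Function.invFun u) (Set.Iic t) = μ (Set.Iic (u t)) := by
    intro u hu hus t
    rw [Measure.map_apply (hu.continuous_invFun hus).measurable measurableSet_Iic]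
    congr 1
    ext y
    exact hu.invFun_le_iff hus y t
  funext t
  apply (strictMono_measure_Iic μ).injective
  simp only [← hcdf hf hfs, ← hcdf hg hgs, h]

theorem map_eval_map_piMap {ι : Type*} {X Y : ι → Type*} [∀ i, MeasurableSpace (X i)]
    [∀ i, MeasurableSpace (Y i)] (μ : Measure (∀ i, X i)) {φ : ∀ i, X i → Y i}
    (hφ : ∀ i, Measurable (φ i)) (j : ι) :
    (μ.map fun x i => φ i (x i)).map (fun y => y j) = (μ.map fun x => x j).map (φ j) := by
  have hmap : Measurable fun (x : ∀ i, X i) i => φ i (x i) := by fun_prop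
  rw [Measure.map_map (measurable_pi_apply j) hmap, Measure.map_map (hφ j) (measurable_pi_apply j)]
  rfl

section PsdSqrt

variable {d : ℕ} {S : Matrix (Fin d) (Fin d) ℝ}

theorem psdSqrt_mul_self (hS : S.PosSemidef) : psdSqrt S * psdSqrt S = S := by
  set U : Matrix (Fin d) (Fin d) ℝ := hS.1.eigenvectorUnitary.1
  set D : Matrix (Fin d) (Fin d) ℝ :=
    diagonal ((RCLike.ofReal : ℝ → ℝ) ∘ Real.sqrt ∘ hS.1.eigenvalues)
  have hU : star U * U = 1 := Unitary.star_mul_self_of_mem hS.1.eigenvectorUnitary.2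
  have hD : D * D = diagonal ((RCLike.ofReal : ℝ → ℝ) ∘ hS.1.eigenvalues) := by
    rw [diagonal_mul_diagonal]
    congr 1
    funext i
    simp [Real.mul_self_sqrt (hS.eigenvalues_nonneg i)]
  have hsqrt : psdSqrt S = U * D * star U := dif_pos hS
  conv_rhs => rw [hS.1.spectral_theorem, Unitary.conjStarAlgAut_apply]
  calc psdSqrt S * psdSqrt S = U * (D * (star U * U) * D) * star U := by
        simp only [hsqrt, Matrix.mul_assoc]
    _ = _ := by rw [hU, Matrix.mul_one, hD]

theorem psdSqrt_row_ne_zero (hS : S.PosSemidef) {j : Fin d} (hj : S j j ≠ 0) :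
    psdSqrt S j ≠ 0 := by
  intro hrow
  apply hj
  rw [← psdSqrt_mul_self hS, mul_apply]
  simp [hrow]

instance isProbabilityMeasure_gaussianPi (m : Fin d → ℝ) :
    IsProbabilityMeasure (gaussianPi d m S) :=
  Measure.isProbabilityMeasure_map (by fun_prop)

theorem gaussianPi_map_eval_isOpenPosMeasure (m : Fin d → ℝ) (hS : S.PosSemidef) {j : Fin d}
    (hj : S j j ≠ 0) : ((gaussianPi d m S).map fun x => x j).IsOpenPosMeasure := by
  have := gaussianReal_isOpenPosMeasure 0 one_ne_zero
  set r := psdSqrt S j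
  obtain ⟨k, hk : r k ≠ 0⟩ := Function.ne_iff.mp (psdSqrt_row_ne_zero hS hj)
  have hcont : Continuous fun x : Fin d → ℝ => m j + r ⬝ᵥ x := by fun_prop
  have hsurj : Function.Surjective fun x : Fin d → ℝ => m j + r ⬝ᵥ x := fun t =>
    ⟨Pi.single k ((t - m j) / r k), by
      simp only [dotProduct_single, mul_div_cancel₀ _ hk, add_sub_cancel]⟩
  unfold gaussianPi
  rw [Measure.map_map (measurable_pi_apply j) (by fun_prop)]
  exact hcont.isOpenPosMeasure_map hsurj

end PsdSqrt

theorem stmt14_general (d : ℕ) (S L : Matrix (Fin d) (Fin d) ℝ)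
    (hS : S.PosSemidef)
    (hSd : ∀ j, S j j = 1)
    (f g : Fin d → ℝ → ℝ)
    (hf₁ : ∀ j, StrictMono (f j))
    (hf₃ : ∀ j, Function.Bijective (f j))
    (hg₁ : ∀ j, StrictMono (g j))
    (hg₃ : ∀ j, Function.Bijective (g j))
    (P Q : Measure (Fin d → ℝ))
    (hP : P = (gaussianPi d 0 S).map fun z i => Function.invFun (f i) (z i))
    (hQ : Q = (gaussianPi d 0 L).map fun z i => Function.invFun (g i) (z i))
    (hSL : S = L)
    (hmarg : ∀ j, P.map (fun x => x j) = Q.map (fun x => x j)) :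
    P = Q := by
  subst hSL
  have hfg : f = g := by
    funext j
    have hfm i := ((hf₁ i).continuous_invFun (hf₃ i).2).measurable
    have hgm i := ((hg₁ i).continuous_invFun (hg₃ i).2).measurable
    have hν := Measure.isProbabilityMeasure_map (μ := gaussianPi d 0 S)
      (measurable_pi_apply j).aemeasurable
    have hνpos := gaussianPi_map_eval_isOpenPosMeasure 0 hS (hSd j ▸ one_ne_zero)
    apply eq_of_map_invFun_eq ((gaussianPi d 0 S).map fun x => x j)
      (hf₁ j) (hf₃ j).2 (hg₁ j) (hg₃ j).2
    rw [← map_eval_map_piMap _ hfm, ← map_eval_map_piMap _ hgm, ← hP, ← hQ, hmarg j]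
  rw [hP, hQ, hfg]

/-- a nonparanormal distribution is uniquely determined by its univariate
marginal distributions and its latent correlation matrix. -/
theorem stmt14 (d : ℕ) (S L : Matrix (Fin d) (Fin d) ℝ)
    (hS : S.PosSemidef) (hL : L.PosSemidef)
    (hSd : ∀ j, S j j = 1) (hLd : ∀ j, L j j = 1)
    (f g : Fin d → ℝ → ℝ)
    (hf₁ : ∀ j, StrictMono (f j)) (hf₂ : ∀ j, Continuous (f j))
    (hf₃ : ∀ j, Function.Bijective (f j))
    (hg₁ : ∀ j, StrictMono (g j)) (hg₂ : ∀ j, Continuous (g j))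
    (hg₃ : ∀ j, Function.Bijective (g j))
    (P Q : Measure (Fin d → ℝ))
    (hP : P = (gaussianPi d 0 S).map fun z i => Function.invFun (f i) (z i))
    (hQ : Q = (gaussianPi d 0 L).map fun z i => Function.invFun (g i) (z i))
    (hSL : S = L)
    (hmarg : ∀ j, P.map (fun x => x j) = Q.map (fun x => x j)) :
    P = Q :=
  stmt14_general d S L hS hSd f g hf₁ hf₃ hg₁ hg₃ P Q hP hQ hSL hmarg
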